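/- arXiv:2501.07461 — 3 statements merged into one kernel-verified Lean document; each statement's English description precedes it below -/
import Mathlib

section
/- Let E be a real inner product space, 0 < m < L, and let f : E → ℝ be differentiable, m-strongly convex with L-Lipschitz gradient. Let x⋆ ∈ E satisfy ∇f(x⋆) = 0. Define V(x) := (L − m)( f(x) − f(x⋆) − (m/2)‖x − x⋆‖² ) − (1/2)‖∇f(x) − m(x − x⋆)‖². Then V(x⋆) = 0 and V(x) ≥ 0 for all x ∈ E. -/
open scoped RealInnerProductSpace

/-- `g` is the gradient of `f` at `x` (stated via the Fréchet derivative and the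
canonical map into the dual, so that no completeness assumption is needed). -/
def HasGradAt {E : Type*} [NormedAddCommGroup E] [InnerProductSpace ℝ E]
    (f : E → ℝ) (g : E) (x : E) : Prop :=
  HasFDerivAt f ((InnerProductSpace.toDualMap ℝ E) g : E →L[ℝ] ℝ) x

/-
Proof idea: `φ x := f x - m/2 ‖x - x⋆‖²` is convex with gradient `g x := ∇f x - m (x - x⋆)`,
which vanishes at `x⋆`, and `⟪g u - g v, u - v⟫ ≤ (L - m) ‖u - v‖²`. The descent lemma at the
gradient step `y := x - g x / (L - m)` gives `φ y ≤ φ x - ‖g x‖² / (2 (L - m))`, while `φ x⋆ ≤ φ y`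
because `x⋆` minimizes the convex `φ`. Together, `‖g x‖² ≤ 2 (L - m) (φ x - φ x⋆)`, i.e. `V x ≥ 0`.
-/

section

variable {E : Type*} [NormedAddCommGroup E] [InnerProductSpace ℝ E]

lemma HasGradAt.hasDerivAt_comp_add_smul {f : E → ℝ} {g a v : E} {t : ℝ}
    (h : HasGradAt f g (a + t • v)) :
    HasDerivAt (fun s : ℝ => f (a + s • v)) ⟪g, v⟫ t := by
  have hline : HasDerivAt (fun s : ℝ => a + s • v) v t := by
    simpa using ((hasDerivAt_id t).smul_const v).const_add a
  unfold HasGradAt at h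
  exact h.comp_hasDerivAt t hline

lemma HasGradAt.sub_half_mul_norm_sub_sq {f : E → ℝ} {g x : E} (h : HasGradAt f g x)
    (m : ℝ) (c : E) :
    HasGradAt (fun y => f y - m / 2 * ‖y - c‖ ^ 2) (g - m • (x - c)) x := by
  have hsq := ((hasFDerivAt_id x).sub_const c).norm_sq.const_mul (m / 2)
  unfold HasGradAt at h ⊢
  refine (h.sub hsq).congr_fderiv ?_
  ext v
  simp only [sub_apply, smul_apply, ContinuousLinearMap.comp_id, coe_innerSL_apply,
    InnerProductSpace.toDualMap_apply_apply, id_eq, map_sub, map_smul, nsmul_eq_mul, smul_eq_mul]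
  ring

lemma ConvexOn.sub_half_mul_norm_sub_sq {s : Set E} {f : E → ℝ} {m : ℝ}
    (h : ConvexOn ℝ s fun x => f x - m / 2 * ‖x‖ ^ 2) (c : E) :
    ConvexOn ℝ s fun x => f x - m / 2 * ‖x - c‖ ^ 2 := by
  have hexpand : (fun x => f x - m / 2 * ‖x - c‖ ^ 2)
      = fun x => (f x - m / 2 * ‖x‖ ^ 2) + ⟪m • c, x⟫ + -(m / 2 * ‖c‖ ^ 2) := by
    ext x
    rw [norm_sub_sq_real, real_inner_smul_left, real_inner_comm]
    ring
  rw [hexpand]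
  exact (h.add ((innerₛₗ ℝ (m • c)).convexOn h.1)).add_const _

lemma ConvexOn.add_inner_le_of_hasGradAt {φ : E → ℝ} {g x : E} (hφ : ConvexOn ℝ Set.univ φ)
    (h : HasGradAt φ g x) (y : E) : φ x + ⟪g, y - x⟫ ≤ φ y := by
  have hline : ConvexOn ℝ Set.univ fun t : ℝ => φ (x + t • (y - x)) := by
    have hcomp : (fun t : ℝ => φ (x + t • (y - x))) = φ ∘ AffineMap.lineMap x y := by
      ext t
      simp [AffineMap.lineMap_apply, add_comm]
    simpa [hcomp] using hφ.comp_affineMap (AffineMap.lineMap x y)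
  have hderiv : HasDerivAt (fun t : ℝ => φ (x + t • (y - x))) ⟪g, y - x⟫ 0 :=
    HasGradAt.hasDerivAt_comp_add_smul (by rwa [zero_smul, add_zero])
  have hslope := hline.le_slope_of_hasDerivAt (Set.mem_univ 0) (Set.mem_univ 1) one_pos hderiv
  simp only [slope_def_field, one_smul, add_sub_cancel, zero_smul, add_zero, sub_zero,
    div_one] at hslope
  linarith

lemma le_add_add_half_of_hasDerivAt_le {ψ ψ' : ℝ → ℝ} {c : ℝ}
    (hψ : ∀ t, HasDerivAt ψ (ψ' t) t) (hle : ∀ t ∈ Set.Ioo (0 : ℝ) 1, ψ' t ≤ ψ' 0 + c * t) :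
    ψ 1 ≤ ψ 0 + ψ' 0 + c / 2 := by
  set F : ℝ → ℝ := fun t => ψ t - t * ψ' 0 - c / 2 * t ^ 2
  have hF : ∀ t, HasDerivAt F (ψ' t - ψ' 0 - c * t) t := by
    intro t
    refine (((hψ t).sub ((hasDerivAt_id t).mul_const (ψ' 0))).sub
      ((hasDerivAt_pow 2 t).const_mul (c / 2))).congr_deriv ?_
    ring
  have hanti : AntitoneOn F (Set.Icc 0 1) := by
    refine antitoneOn_of_deriv_nonpos (convex_Icc 0 1)
      (fun t _ => (hF t).continuousAt.continuousWithinAt)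
      (fun t _ => (hF t).differentiableAt.differentiableWithinAt) fun t ht => ?_
    rw [interior_Icc] at ht
    rw [(hF t).deriv]
    linarith [hle t ht]
  have := hanti (by norm_num) (by norm_num) zero_le_one
  simp only [F] at this
  linarith

lemma le_add_inner_add_of_inner_sub_le {φ : E → ℝ} {g : E → E} {K : ℝ}
    (hφ : ∀ x, HasGradAt φ (g x) x) (hg : ∀ u v, ⟪g u - g v, u - v⟫ ≤ K * ‖u - v‖ ^ 2)
    (a b : E) : φ b ≤ φ a + ⟪g a, b - a⟫ + K / 2 * ‖b - a‖ ^ 2 := by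
  have hline (t : ℝ) := (hφ (a + t • (b - a))).hasDerivAt_comp_add_smul
  have hslope : ∀ t ∈ Set.Ioo (0 : ℝ) 1, ⟪g (a + t • (b - a)), b - a⟫
      ≤ ⟪g (a + (0 : ℝ) • (b - a)), b - a⟫ + K * ‖b - a‖ ^ 2 * t := by
    rintro t ⟨ht, -⟩
    have hmono := hg (a + t • (b - a)) a
    rw [add_sub_cancel_left, inner_smul_right, norm_smul, Real.norm_of_nonneg ht.le,
      inner_sub_left] at hmono
    rw [zero_smul, add_zero]
    nlinarith
  have := le_add_add_half_of_hasDerivAt_le hline hslope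
  simp only [zero_smul, add_zero, one_smul, add_sub_cancel] at this
  linarith

lemma ConvexOn.sq_norm_grad_le_two_mul_sub_min {φ : E → ℝ} {g : E → E} {K : ℝ} (hK : 0 < K)
    (hconv : ConvexOn ℝ Set.univ φ) (hφ : ∀ x, HasGradAt φ (g x) x)
    (hg : ∀ u v, ⟪g u - g v, u - v⟫ ≤ K * ‖u - v‖ ^ 2) {xs : E} (hxs : g xs = 0) (x : E) :
    ‖g x‖ ^ 2 ≤ 2 * K * (φ x - φ xs) := by
  set y := x - K⁻¹ • g x
  have hmin := hconv.add_inner_le_of_hasGradAt (hφ xs) y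
  rw [hxs, inner_zero_left, add_zero] at hmin
  have hdesc := le_add_inner_add_of_inner_sub_le hφ hg x y
  rw [sub_sub_cancel_left, inner_neg_right, norm_neg, inner_smul_right, norm_smul,
    real_inner_self_eq_norm_sq, Real.norm_of_nonneg (inv_nonneg.2 hK.le)] at hdesc
  have hstep : K⁻¹ * ‖g x‖ ^ 2 ≤ 2 * (φ x - φ xs) := by
    have : K / 2 * (K⁻¹ * ‖g x‖) ^ 2 = K⁻¹ / 2 * ‖g x‖ ^ 2 := by field_simp
    linarith
  calc ‖g x‖ ^ 2 = K * (K⁻¹ * ‖g x‖ ^ 2) := by field_simp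
    _ ≤ K * (2 * (φ x - φ xs)) := by gcongr
    _ = 2 * K * (φ x - φ xs) := by ring

lemma inner_sub_smul_sub_le_of_lipschitz {G : E → E} {L : ℝ}
    (hG : ∀ x y, ‖G x - G y‖ ≤ L * ‖x - y‖) (m : ℝ) (c u v : E) :
    ⟪(G u - m • (u - c)) - (G v - m • (v - c)), u - v⟫ ≤ (L - m) * ‖u - v‖ ^ 2 := by
  have hdiff : (G u - m • (u - c)) - (G v - m • (v - c)) = (G u - G v) - m • (u - v) := by
    module
  have hcs : ⟪G u - G v, u - v⟫ ≤ L * ‖u - v‖ ^ 2 :=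
    calc ⟪G u - G v, u - v⟫ ≤ ‖G u - G v‖ * ‖u - v‖ := real_inner_le_norm _ _
      _ ≤ L * ‖u - v‖ * ‖u - v‖ := by gcongr; exact hG u v
      _ = L * ‖u - v‖ ^ 2 := by ring
  rw [hdiff, inner_sub_left, real_inner_smul_left, real_inner_self_eq_norm_sq]
  linarith

end

theorem storage_nonneg_general {E : Type*} [NormedAddCommGroup E] [InnerProductSpace ℝ E]
    (m L : ℝ) (hmL : m < L)
    (f : E → ℝ) (f' : E → E)
    (hgrad : ∀ x, HasGradAt f (f' x) x)
    (hsc : ConvexOn ℝ Set.univ (fun x => f x - m / 2 * ‖x‖ ^ 2))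
    (hlip : ∀ x y, ‖f' x - f' y‖ ≤ L * ‖x - y‖)
    (xstar : E) (hstar : f' xstar = 0)
    (V : E → ℝ)
    (hV : ∀ x, V x = (L - m) * (f x - f xstar - m / 2 * ‖x - xstar‖ ^ 2)
        - 1 / 2 * ‖f' x - m • (x - xstar)‖ ^ 2) :
    V xstar = 0 ∧ ∀ x, 0 ≤ V x := by
  have hg_star : f' xstar - m • (xstar - xstar) = 0 := by simp [hstar]
  have hbound := (hsc.sub_half_mul_norm_sub_sq xstar).sq_norm_grad_le_two_mul_sub_min
    (sub_pos.2 hmL) (fun x => (hgrad x).sub_half_mul_norm_sub_sq m xstar)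
    (inner_sub_smul_sub_le_of_lipschitz hlip m xstar) hg_star
  refine ⟨by simp [hV, hstar], fun x => ?_⟩
  have hx := hbound x
  simp only [sub_self, norm_zero] at hx
  rw [hV]
  linarith

/-- The storage-type function `V` vanishes at the minimizer and is nonnegative. -/
theorem storage_nonneg {E : Type*} [NormedAddCommGroup E] [InnerProductSpace ℝ E]
    (m L : ℝ) (hm : 0 < m) (hmL : m < L)
    (f : E → ℝ) (f' : E → E)
    (hgrad : ∀ x, HasGradAt f (f' x) x)
    (hsc : ConvexOn ℝ Set.univ (fun x => f x - m / 2 * ‖x‖ ^ 2))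
    (hlip : ∀ x y, ‖f' x - f' y‖ ≤ L * ‖x - y‖)
    (xstar : E) (hstar : f' xstar = 0)
    (V : E → ℝ)
    (hV : ∀ x, V x = (L - m) * (f x - f xstar - m / 2 * ‖x - xstar‖ ^ 2)
        - 1 / 2 * ‖f' x - m • (x - xstar)‖ ^ 2) :
    V xstar = 0 ∧ ∀ x, 0 ≤ V x :=
  storage_nonneg_general m L hmL f f' hgrad hsc hlip xstar hstar V hV
end

section
/- Let E be a real inner product space, 0 < m < L, and let f : E → ℝ be differentiable, m-strongly convex with L-Lipschitz gradient. Fix any reference point x⋆ ∈ E and define V(x) := (L − m)( f(x) − f(x⋆) − (m/2)‖x − x⋆‖² ) − (1/2)‖∇f(x) − m(x − x⋆)‖². Then for all x, y ∈ E: V(x) − V(y) ≤ ⟨ ∇f(x) − m(x − x⋆), L(x − x⋆) − ∇f(x) − ( L(y − x⋆) − ∇f(y) ) ⟩. -/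
/-!
Put `h z = f z - (m/2)‖z - x⋆‖²` and `g z = f' z - m (z - x⋆)`, so that `h x⋆ = f x⋆` and
`V = (L - m)(h - h x⋆) - ½‖g‖²`. The Bregman divergence of `h` is that of `f` minus
`(m/2)‖y - x‖²`, hence it lies between `0` (strong convexity) and `((L - m)/2)‖y - x‖²`
(descent lemma for `f`). Comparing `x` with the gradient step `y - (g y - g x)/(L - m)` through the
three-point identity turns these two bounds into the cocoercivity inequality
`½‖g y - g x‖² ≤ (L - m) D_h(x, y)`, which is the claimed increment inequality once the squares
are expanded.
-/

open scoped RealInnerProductSpace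

section Bregman

variable {E : Type*} [NormedAddCommGroup E] [InnerProductSpace ℝ E]

theorem HasGradAt.hasDerivAt_comp_line {f : E → ℝ} {g x v : E} {t : ℝ}
    (hf : HasGradAt f g (x + t • v)) :
    HasDerivAt (fun s : ℝ => f (x + s • v)) ⟪g, v⟫ t := by
  have hline : HasDerivAt (fun s : ℝ => x + s • v) v t := by
    simpa using ((hasDerivAt_id t).smul_const v).const_add x
  have hf' : HasFDerivAt f _ (x + t • v) := hf
  simpa [InnerProductSpace.toDualMap_apply_apply, Function.comp_def] using
    hf'.comp_hasDerivAt t hline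

theorem HasGradAt.sub_half_mul_norm_sq {f : E → ℝ} {g x : E} (hf : HasGradAt f g x) (m : ℝ) :
    HasGradAt (fun z => f z - m / 2 * ‖z‖ ^ 2) (g - m • x) x := by
  refine (HasFDerivAt.sub hf
    ((hasStrictFDerivAt_norm_sq x).hasFDerivAt.const_mul (m / 2))).congr_fderiv ?_
  ext v
  simp only [sub_apply, InnerProductSpace.toDualMap_apply_apply,
    smul_apply, coe_innerSL_apply, nsmul_eq_mul, smul_eq_mul, map_sub,
    map_smul]
  ring

def bregman (f : E → ℝ) (g : E → E) (x y : E) : ℝ := f y - f x - ⟪g x, y - x⟫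

theorem bregman_three_point (f : E → ℝ) (g : E → E) (x y z : E) :
    bregman f g x z = bregman f g x y + bregman f g y z + ⟪g y - g x, z - y⟫ := by
  have hzx : z - x = (z - y) + (y - x) := by abel
  simp only [bregman, hzx, inner_add_right, inner_sub_left]
  ring

theorem bregman_sub_half_mul_norm_sub_sq (f : E → ℝ) (g : E → E) (m : ℝ) (c x y : E) :
    bregman (fun z => f z - m / 2 * ‖z - c‖ ^ 2) (fun z => g z - m • (z - c)) x y
      = bregman f g x y - m / 2 * ‖y - x‖ ^ 2 := by
  have hyc : y - c = (x - c) + (y - x) := by abel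
  simp only [bregman, hyc, norm_add_sq_real, inner_sub_left, real_inner_smul_left]
  ring

theorem ConvexOn.bregman_nonneg {f : E → ℝ} {g : E → E} (hf : ConvexOn ℝ Set.univ f)
    {x : E} (hg : HasGradAt f (g x) x) (y : E) : 0 ≤ bregman f g x y := by
  have hline : ConvexOn ℝ Set.univ (fun t : ℝ => f (x + t • (y - x))) := by
    simpa [Function.comp_def, AffineMap.lineMap_apply_module', add_comm] using
      hf.comp_affineMap (AffineMap.lineMap x y)
  have hd : HasDerivAt (fun t : ℝ => f (x + t • (y - x))) ⟪g x, y - x⟫ 0 :=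
    HasGradAt.hasDerivAt_comp_line (by simpa using hg)
  have hslope := hline.le_slope_of_hasDerivAt (Set.mem_univ 0) (Set.mem_univ 1) zero_lt_one hd
  simp only [slope_def_field, one_smul, add_sub_cancel, zero_smul, add_zero, sub_zero,
    div_one] at hslope
  simp only [bregman]
  linarith

theorem half_mul_norm_sub_sq_le_bregman {f : E → ℝ} {f' : E → E} {m : ℝ}
    (hsc : ConvexOn ℝ Set.univ (fun z => f z - m / 2 * ‖z‖ ^ 2))
    {x : E} (hf : HasGradAt f (f' x) x) (y : E) :
    m / 2 * ‖y - x‖ ^ 2 ≤ bregman f f' x y := by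
  have hq := hsc.bregman_nonneg (g := fun z => f' z - m • z) (hf.sub_half_mul_norm_sq m) y
  have hshift := bregman_sub_half_mul_norm_sub_sq f f' m 0 x y
  simp only [sub_zero] at hshift
  linarith

theorem bregman_le_of_lipschitz {f : E → ℝ} {g : E → E} {L : ℝ}
    (hg : ∀ z, HasGradAt f (g z) z) (hlip : ∀ a b, ‖g a - g b‖ ≤ L * ‖a - b‖) (x y : E) :
    bregman f g x y ≤ L / 2 * ‖y - x‖ ^ 2 := by
  set v := y - x
  let φ : ℝ → ℝ := fun t => f (x + t • v) - t * ⟪g x, v⟫ - L / 2 * (t ^ 2 * ‖v‖ ^ 2)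
  have hφ : ∀ t, HasDerivAt φ (⟪g (x + t • v) - g x, v⟫ - L * t * ‖v‖ ^ 2) t := by
    intro t
    have h : HasDerivAt φ _ t := (((hg (x + t • v)).hasDerivAt_comp_line).sub
      ((hasDerivAt_id t).mul_const ⟪g x, v⟫)).sub
      (((hasDerivAt_pow 2 t).mul_const (‖v‖ ^ 2)).const_mul (L / 2))
    refine h.congr_deriv ?_
    simp only [one_mul, Nat.cast_ofNat, Nat.add_one_sub_one, pow_one, inner_sub_left]
    ring
  have hφ_nonpos : ∀ t, 0 < t → ⟪g (x + t • v) - g x, v⟫ - L * t * ‖v‖ ^ 2 ≤ 0 := by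
    intro t ht
    have hstep : ‖g (x + t • v) - g x‖ ≤ L * t * ‖v‖ := by
      simpa [norm_smul, abs_of_pos ht, mul_assoc] using hlip (x + t • v) x
    have := (real_inner_le_norm _ _).trans (mul_le_mul_of_nonneg_right hstep (norm_nonneg v))
    linarith
  have hanti : AntitoneOn φ (Set.Icc 0 1) :=
    antitoneOn_of_hasDerivWithinAt_nonpos (convex_Icc 0 1)
      (fun t _ => (hφ t).continuousAt.continuousWithinAt)
      (fun t _ => (hφ t).hasDerivWithinAt)
      (fun t ht => hφ_nonpos t (by rw [interior_Icc] at ht; exact ht.1))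
  have h01 : φ 1 ≤ φ 0 := hanti (by simp) (by simp) zero_le_one
  simp only [φ, v, one_smul, add_sub_cancel, one_mul, one_pow, zero_smul, add_zero, zero_mul,
    sub_zero, ne_eq, OfNat.ofNat_ne_zero, not_false_eq_true, zero_pow, mul_zero] at h01
  simp only [bregman]
  linarith

theorem half_norm_sq_sub_le_mul_bregman {f : E → ℝ} {g : E → E} {M : ℝ} (hM : 0 < M)
    (hnonneg : ∀ a b, 0 ≤ bregman f g a b) (hle : ∀ a b, bregman f g a b ≤ M / 2 * ‖b - a‖ ^ 2)
    (x y : E) :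
    1 / 2 * ‖g y - g x‖ ^ 2 ≤ M * bregman f g x y := by
  set w := g y - g x
  set z := y - M⁻¹ • w
  have hzy : z - y = -(M⁻¹ • w) := by simp [z]
  have h3 := bregman_three_point f g x y z
  have hxz := hnonneg x z
  have hyz := hle y z
  rw [hzy, norm_neg, norm_smul, Real.norm_of_nonneg (inv_nonneg.2 hM.le)] at hyz
  rw [hzy, inner_neg_right, real_inner_smul_right, real_inner_self_eq_norm_sq] at h3
  have hstep : 0 ≤ bregman f g x y - M⁻¹ / 2 * ‖w‖ ^ 2 := by
    have hM' : M / 2 * (M⁻¹ * ‖w‖) ^ 2 = M⁻¹ / 2 * ‖w‖ ^ 2 := by field_simp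
    linarith
  have := mul_nonneg hM.le hstep
  field_simp at this ⊢
  linarith

end Bregman

theorem storage_increment_general {E : Type*} [NormedAddCommGroup E] [InnerProductSpace ℝ E]
    (m L : ℝ) (hmL : m < L)
    (f : E → ℝ) (f' : E → E)
    (hgrad : ∀ x, HasGradAt f (f' x) x)
    (hsc : ConvexOn ℝ Set.univ (fun x => f x - m / 2 * ‖x‖ ^ 2))
    (hlip : ∀ x y, ‖f' x - f' y‖ ≤ L * ‖x - y‖)
    (xstar : E)
    (V : E → ℝ)
    (hV : ∀ x, V x = (L - m) * (f x - f xstar - m / 2 * ‖x - xstar‖ ^ 2)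
        - 1 / 2 * ‖f' x - m • (x - xstar)‖ ^ 2) :
    ∀ x y : E,
      V x - V y ≤ ⟪f' x - m • (x - xstar),
        L • (x - xstar) - f' x - (L • (y - xstar) - f' y)⟫ := by
  intro x y
  rw [hV x, hV y]
  set h : E → ℝ := fun z => f z - m / 2 * ‖z - xstar‖ ^ 2
  set g : E → E := fun z => f' z - m • (z - xstar)
  have hcoco := half_norm_sq_sub_le_mul_bregman (f := h) (g := g) (sub_pos.2 hmL)
    (fun a b => by
      rw [bregman_sub_half_mul_norm_sub_sq]
      linarith [half_mul_norm_sub_sq_le_bregman hsc (hgrad a) b])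
    (fun a b => by
      rw [bregman_sub_half_mul_norm_sub_sq]
      linarith [bregman_le_of_lipschitz hgrad hlip a b])
    x y
  have hrhs : L • (x - xstar) - f' x - (L • (y - xstar) - f' y)
      = (L - m) • (x - y) + (g y - g x) := by
    simp only [g]
    module
  rw [hrhs, inner_add_right, real_inner_smul_right, inner_sub_right, inner_sub_right,
    real_inner_self_eq_norm_sq]
  rw [norm_sub_sq_real, real_inner_comm] at hcoco
  simp only [bregman, h, inner_sub_right] at hcoco
  linear_combination hcoco

/-- Increment (subgradient-type) inequality for the storage function `V`. -/
theorem storage_increment {E : Type*} [NormedAddCommGroup E] [InnerProductSpace ℝ E]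
    (m L : ℝ) (hm : 0 < m) (hmL : m < L)
    (f : E → ℝ) (f' : E → E)
    (hgrad : ∀ x, HasGradAt f (f' x) x)
    (hsc : ConvexOn ℝ Set.univ (fun x => f x - m / 2 * ‖x‖ ^ 2))
    (hlip : ∀ x y, ‖f' x - f' y‖ ≤ L * ‖x - y‖)
    (xstar : E)
    (V : E → ℝ)
    (hV : ∀ x, V x = (L - m) * (f x - f xstar - m / 2 * ‖x - xstar‖ ^ 2)
        - 1 / 2 * ‖f' x - m • (x - xstar)‖ ^ 2) :
    ∀ x y : E,
      V x - V y ≤ ⟪f' x - m • (x - xstar),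
        L • (x - xstar) - f' x - (L • (y - xstar) - f' y)⟫ :=
  storage_increment_general m L hmL f f' hgrad hsc hlip xstar V hV
end

section
/- Let d ≥ 1 and ρ ∈ (0,1). For each k ∈ ℕ let f_k : ℝ^d → ℝ be differentiable, m_k-strongly convex with L_k-Lipschitz gradient, where 0 < m_k < L_k, and let x⋆_k ∈ ℝ^d satisfy ∇f_k(x⋆_k) = 0. Let (x_k) be any sequence in ℝ^d. Define x̃_k := x_k − x⋆_k, ∇_k := ∇f_k(x_k), Δx⋆_k := x⋆_k − x⋆_{k+1}, Δ_k := ∇f_k(x_k) − ∇f_{k+1}(x_k), a_k := sqrt( m_k (L_k − m_k) / 2 ), and f̂_k(x) := f_k(x) − f_k(x⋆_k). Define S_0 := ⟨ L_0 x̃_0 − ∇_0, ∇_0 − m_0 x̃_0 ⟩ and, for k ≥ 1, S_k := ⟨ L_k x̃_k − ∇_k − ρ² L_k ( x̃_{k−1} + Δx⋆_{k−1} ) + ρ² ( ∇_{k−1} − Δ_{k−1} ), ∇_k − m_k x̃_k ⟩ + ρ² a_{k−1}² ‖x̃_{k−1}‖² − ρ² a_k² ‖x̃_{k−1} + Δx⋆_{k−1}‖²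 + (ρ²/2) ‖∇_{k−1} − m_{k−1} x̃_{k−1}‖² − (ρ²/2) ‖∇_{k−1} − Δ_{k−1} − m_k ( x̃_{k−1} + Δx⋆_{k−1} )‖². Then for every N ≥ 1: Σ_{k=0}^{N} ρ^{−2k} S_k ≥ Σ_{k=1}^{N} ρ^{−2(k−1)} [ (L_{k−1} − m_{k−1}) f̂_{k−1}(x_{k−1}) − (L_k − m_k) f̂_k(x_{k−1}) ]. -/
/-!
Put `M = L - m` and `g = f - (m/2)‖· - x⋆‖²`. Then `g` is convex and `g y ≤ g z + ⟪∇g z, y - z⟫ +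
(M/2)‖y - z‖²`, which together give the interpolation inequality
`M (g z + ⟪∇g z, y - z⟫) + ½‖∇g y - ∇g z‖² ≤ M g y`.
Take as storage `Q_k = M_k (g_k(x_k) - f_k(x⋆_k)) - ½‖∇g_k(x_k)‖²`; interpolating between `x⋆_k`
and `x_k` shows `Q_k ≥ 0`. The interpolation inequalities of `g_{k+1}` between `x_{k+1}` and
`x⋆_{k+1}` and between `x_{k+1}` and `x_k`, combined with weights `1 - ρ²` and `ρ²`, give the
dissipation inequality `Q_{k+1} - ρ² Q_k + ρ² D_{k+1} ≤ S_{k+1}`, where `D_{k+1}` is the change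
of the landscape. Weighting by `ρ^{-2(k+1)}` and summing telescopes.
-/

open scoped RealInnerProductSpace
open Set Finset

section Calculus

variable {F : Type*} [NormedAddCommGroup F] [InnerProductSpace ℝ F]

theorem HasGradientAt.hasDerivAt_add_smul [CompleteSpace F] {f : F → ℝ} {g z v : F} {t : ℝ}
    (hf : HasGradientAt f g (z + t • v)) :
    HasDerivAt (fun s : ℝ => f (z + s • v)) ⟪g, v⟫ t := by
  have hline : HasDerivAt (fun s : ℝ => z + s • v) v t := by
    simpa using ((hasDerivAt_id t).smul_const v).const_add z
  have := hf.hasFDerivAt.comp_hasDerivAt t hline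
  simp only [InnerProductSpace.toDual_apply_apply] at this
  exact this

theorem ConvexOn.add_le_of_hasDerivAt_add_smul {h : F → ℝ} (hconv : ConvexOn ℝ univ h)
    {z y : F} {c : ℝ} (hd : HasDerivAt (fun t : ℝ => h (z + t • (y - z))) c 0) :
    h z + c ≤ h y := by
  have hline : ConvexOn ℝ univ (fun t : ℝ => h (z + t • (y - z))) := by
    simpa [Function.comp_def, AffineMap.lineMap_apply_module', add_comm] using
      hconv.comp_affineMap (AffineMap.lineMap z y)
  have := hline.le_slope_of_hasDerivAt (mem_univ 0) (mem_univ 1) one_pos hd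
  simp only [slope, sub_zero, inv_one, one_smul, add_sub_cancel, zero_smul, add_zero,
    vsub_eq_sub, smul_eq_mul, one_mul] at this
  linarith

theorem le_add_inner_add_sq_of_lipschitz_gradient [CompleteSpace F] {f : F → ℝ} {f' : F → F}
    {L : ℝ} (hf : ∀ x, HasGradientAt f (f' x) x) (hlip : ∀ x y, ‖f' x - f' y‖ ≤ L * ‖x - y‖)
    (z y : F) :
    f y ≤ f z + ⟪f' z, y - z⟫ + L / 2 * ‖y - z‖ ^ 2 := by
  set v := y - z
  set φ : ℝ → ℝ := fun t => f (z + t • v) - t * ⟪f' z, v⟫ - L / 2 * t ^ 2 * ‖v‖ ^ 2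
  have hφ : ∀ t, HasDerivAt φ (⟪f' (z + t • v) - f' z, v⟫ - L * t * ‖v‖ ^ 2) t := by
    intro t
    have hsq := ((hasDerivAt_pow 2 t).const_mul (L / 2)).mul_const (‖v‖ ^ 2)
    refine ((((hf (z + t • v)).hasDerivAt_add_smul).sub
      ((hasDerivAt_id t).mul_const ⟪f' z, v⟫)).sub hsq).congr_deriv ?_
    simp only [inner_sub_left, Nat.cast_ofNat]
    ring
  have hanti : AntitoneOn φ (Icc 0 1) := by
    refine antitoneOn_of_hasDerivWithinAt_nonpos (convex_Icc 0 1)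
      (fun t _ => (hφ t).continuousAt.continuousWithinAt)
      (fun t _ => (hφ t).hasDerivWithinAt) fun t ht => ?_
    rw [interior_Icc] at ht
    have : ⟪f' (z + t • v) - f' z, v⟫ ≤ L * t * ‖v‖ ^ 2 :=
      calc ⟪f' (z + t • v) - f' z, v⟫ ≤ ‖f' (z + t • v) - f' z‖ * ‖v‖ := real_inner_le_norm _ _
        _ ≤ L * ‖(z + t • v) - z‖ * ‖v‖ := by gcongr; exact hlip _ _
        _ = L * t * ‖v‖ ^ 2 := by
          simp only [add_sub_cancel_left, norm_smul, Real.norm_eq_abs, abs_of_pos ht.1]; ring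
    linarith
  have := hanti (left_mem_Icc.2 zero_le_one) (right_mem_Icc.2 zero_le_one) zero_le_one
  simp only [φ, one_smul, zero_smul, add_zero, zero_mul, sub_zero, v, add_sub_cancel] at this
  linarith

theorem mul_add_inner_add_norm_sub_sq_le {g : F → ℝ} {G : F → F} {M : ℝ} (hM : 0 < M)
    (hlower : ∀ z y, g z + ⟪G z, y - z⟫ ≤ g y)
    (hupper : ∀ z y, g y ≤ g z + ⟪G z, y - z⟫ + M / 2 * ‖y - z‖ ^ 2) (z y : F) :
    M * (g z + ⟪G z, y - z⟫) + 1 / 2 * ‖G y - G z‖ ^ 2 ≤ M * g y := by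
  set D := G y - G z
  -- `w` minimises the quadratic upper model of `g - ⟪G z, ·⟫` at `y`
  set w := y - M⁻¹ • D
  have h1 := hupper y w
  have h2 := hlower z w
  have hwy : w - y = -(M⁻¹ • D) := by simp [w]
  have hwz : w - z = (y - z) - M⁻¹ • D := by simp only [w]; abel
  rw [hwy, inner_neg_right, real_inner_smul_right, norm_neg, norm_smul, Real.norm_eq_abs,
    abs_inv, abs_of_pos hM] at h1
  rw [hwz, inner_sub_right, real_inner_smul_right] at h2
  have hD : ⟪G y, D⟫ = ⟪G z, D⟫ + ‖D‖ ^ 2 := by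
    rw [← real_inner_self_eq_norm_sq, ← inner_add_left]; simp [D]
  have hsq : M / 2 * (M⁻¹ * ‖D‖) ^ 2 = M⁻¹ / 2 * ‖D‖ ^ 2 := by field_simp
  have key : g z + ⟪G z, y - z⟫ + M⁻¹ / 2 * ‖D‖ ^ 2 ≤ g y := by
    rw [hD, hsq] at h1
    linarith
  calc _ = M * (g z + ⟪G z, y - z⟫ + M⁻¹ / 2 * ‖D‖ ^ 2) := by field_simp
    _ ≤ M * g y := by gcongr

end Calculus

section StronglyConvex

variable {F : Type*} [NormedAddCommGroup F] [InnerProductSpace ℝ F] [CompleteSpace F]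
  {f : F → ℝ} {f' : F → F} {m L : ℝ}

theorem add_inner_le_of_convexOn_sub_sq (hf : ∀ x, HasGradientAt f (f' x) x)
    (hsc : ConvexOn ℝ univ fun x => f x - m / 2 * ‖x‖ ^ 2) (xs z y : F) :
    f z - m / 2 * ‖z - xs‖ ^ 2 + ⟪f' z - m • (z - xs), y - z⟫ ≤ f y - m / 2 * ‖y - xs‖ ^ 2 := by
  set v := y - z
  have hline : HasDerivAt (fun t : ℝ => z + t • v) v 0 := by
    simpa using ((hasDerivAt_id (0 : ℝ)).smul_const v).const_add z
  have hgrad : HasGradientAt f (f' z) (z + (0 : ℝ) • v) := by simpa using hf z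
  have hd : HasDerivAt (fun t : ℝ => f (z + t • v) - m / 2 * ‖z + t • v‖ ^ 2)
      (⟪f' z, v⟫ - m / 2 * (2 * ⟪z, v⟫)) 0 := by
    have h := hgrad.hasDerivAt_add_smul.sub (hline.norm_sq.const_mul (m / 2))
    simp only [zero_smul, add_zero] at h
    exact h
  have := hsc.add_le_of_hasDerivAt_add_smul hd
  rw [norm_sub_sq_real z xs, norm_sub_sq_real y xs, inner_sub_left, real_inner_smul_left,
    inner_sub_left]
  have hv : ⟪xs, v⟫ = ⟪y, xs⟫ - ⟪z, xs⟫ := by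
    rw [inner_sub_right, real_inner_comm xs y, real_inner_comm xs z]
  rw [hv]
  linarith

theorem le_add_inner_add_sq_of_lipschitz_gradient_sub_sq (hf : ∀ x, HasGradientAt f (f' x) x)
    (hlip : ∀ x y, ‖f' x - f' y‖ ≤ L * ‖x - y‖) (xs z y : F) :
    f y - m / 2 * ‖y - xs‖ ^ 2 ≤
      f z - m / 2 * ‖z - xs‖ ^ 2 + ⟪f' z - m • (z - xs), y - z⟫ + (L - m) / 2 * ‖y - z‖ ^ 2 := by
  have hdescent := le_add_inner_add_sq_of_lipschitz_gradient hf hlip z y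
  have hsq : ‖y - xs‖ ^ 2 = ‖z - xs‖ ^ 2 + 2 * ⟪z - xs, y - z⟫ + ‖y - z‖ ^ 2 := by
    rw [← norm_add_sq_real, sub_add_sub_cancel']
  rw [hsq, inner_sub_left (f' z), real_inner_smul_left]
  linarith

theorem interpolation_of_convexOn_sub_sq (hf : ∀ x, HasGradientAt f (f' x) x)
    (hsc : ConvexOn ℝ univ fun x => f x - m / 2 * ‖x‖ ^ 2)
    (hlip : ∀ x y, ‖f' x - f' y‖ ≤ L * ‖x - y‖) (hmL : m < L) (xs z y : F) :
    (L - m) * (f z - m / 2 * ‖z - xs‖ ^ 2 + ⟪f' z - m • (z - xs), y - z⟫)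
      + 1 / 2 * ‖(f' y - m • (y - xs)) - (f' z - m • (z - xs))‖ ^ 2
      ≤ (L - m) * (f y - m / 2 * ‖y - xs‖ ^ 2) :=
  mul_add_inner_add_norm_sub_sq_le (g := fun x => f x - m / 2 * ‖x - xs‖ ^ 2)
    (G := fun x => f' x - m • (x - xs)) (sub_pos.2 hmL)
    (add_inner_le_of_convexOn_sub_sq hf hsc xs)
    (le_add_inner_add_sq_of_lipschitz_gradient_sub_sq hf hlip xs) z y

end StronglyConvex

section Storage

variable {F : Type*} [NormedAddCommGroup F] [InnerProductSpace ℝ F]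

noncomputable def storage (f : F → ℝ) (f' : F → F) (m L : ℝ) (xs x : F) : ℝ :=
  (L - m) * (f x - m / 2 * ‖x - xs‖ ^ 2 - f xs) - 1 / 2 * ‖f' x - m • (x - xs)‖ ^ 2

variable [CompleteSpace F] {f : F → ℝ} {f' : F → F} {m L : ℝ} {xs : F}

theorem storage_nonneg_s7 (hf : ∀ x, HasGradientAt f (f' x) x)
    (hsc : ConvexOn ℝ univ fun x => f x - m / 2 * ‖x‖ ^ 2)
    (hlip : ∀ x y, ‖f' x - f' y‖ ≤ L * ‖x - y‖) (hmL : m < L) (hxs : f' xs = 0) (x : F) :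
    0 ≤ storage f f' m L xs x := by
  have h := interpolation_of_convexOn_sub_sq hf hsc hlip hmL xs xs x
  simp only [hxs, sub_self, smul_zero, norm_zero, inner_zero_left, sub_zero, add_zero,
    ne_eq, OfNat.ofNat_ne_zero, not_false_eq_true, zero_pow, mul_zero] at h
  unfold storage
  linarith

theorem storage_le_inner_add (hf : ∀ x, HasGradientAt f (f' x) x)
    (hsc : ConvexOn ℝ univ fun x => f x - m / 2 * ‖x‖ ^ 2)
    (hlip : ∀ x y, ‖f' x - f' y‖ ≤ L * ‖x - y‖) (hmL : m < L) (hxs : f' xs = 0)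
    {c : ℝ} (hc0 : 0 ≤ c) (hc1 : c ≤ 1) (z y : F) :
    storage f f' m L xs y ≤
      ⟪L • (y - xs) - f' y - c • (L • (z - xs)) + c • f' z, f' y - m • (y - xs)⟫
        + c * storage f f' m L xs z := by
  have hA := interpolation_of_convexOn_sub_sq hf hsc hlip hmL xs y xs
  have hB := interpolation_of_convexOn_sub_sq hf hsc hlip hmL xs y z
  simp only [hxs, sub_self, smul_zero, norm_zero, zero_sub, norm_neg, ne_eq,
    OfNat.ofNat_ne_zero, not_false_eq_true, zero_pow, mul_zero, sub_zero] at hA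
  set Gy := f' y - m • (y - xs)
  set Gz := f' z - m • (z - xs)
  have hvec : L • (y - xs) - f' y - c • (L • (z - xs)) + c • f' z
      = (L - m) • (y - xs) - Gy - c • ((L - m) • (z - xs) - Gz) := by
    simp only [Gy, Gz]; module
  have hxsy : ⟪Gy, xs - y⟫ = -⟪y - xs, Gy⟫ := by
    rw [real_inner_comm, ← inner_neg_left, neg_sub]
  have hzy : ⟪Gy, z - y⟫ = ⟪z - xs, Gy⟫ - ⟪y - xs, Gy⟫ := by
    rw [real_inner_comm, ← inner_sub_left, sub_sub_sub_cancel_right]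
  rw [hxsy] at hA
  rw [hzy, norm_sub_sq_real Gz Gy] at hB
  rw [hvec]
  simp only [inner_sub_left, real_inner_smul_left, real_inner_self_eq_norm_sq] at hA hB ⊢
  unfold storage
  linear_combination (1 - c) * hA + c * hB

end Storage

section Telescoping

variable {ρ : ℝ} {S Q D : ℕ → ℝ}

theorem sum_zpow_mul_add_le_of_dissipation (hρ : ρ ≠ 0) (h0 : Q 0 ≤ S 0)
    (hstep : ∀ n, Q (n + 1) - ρ ^ 2 * Q n + ρ ^ 2 * D (n + 1) ≤ S (n + 1)) (N : ℕ) :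
    ∑ k ∈ Icc 1 N, ρ ^ (-(2 * ((k : ℤ) - 1))) * D k + ρ ^ (-(2 * (N : ℤ))) * Q N ≤
      ∑ k ∈ range (N + 1), ρ ^ (-(2 * (k : ℤ))) * S k := by
  induction N with
  | zero => simpa using h0
  | succ n ih =>
    have hshift : ∀ c, ρ ^ (-(2 * ((n + 1 : ℕ) : ℤ))) * (ρ ^ 2 * c) =
        ρ ^ (-(2 * (n : ℤ))) * c := by
      intro c
      rw [← mul_assoc, ← zpow_natCast ρ 2, ← zpow_add₀ hρ]
      push_cast
      ring_nf
    have hexp : ρ ^ (-(2 * (((n + 1 : ℕ) : ℤ) - 1))) = ρ ^ (-(2 * (n : ℤ))) := by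
      push_cast
      ring_nf
    have hweight : 0 ≤ ρ ^ (-(2 * ((n + 1 : ℕ) : ℤ))) :=
      Even.zpow_nonneg ⟨-((n + 1 : ℕ) : ℤ), by ring⟩ ρ
    have := mul_le_mul_of_nonneg_left (hstep n) hweight
    rw [mul_add, mul_sub, hshift, hshift] at this
    rw [sum_Icc_succ_top (by omega), sum_range_succ, hexp]
    linarith

theorem sum_zpow_mul_le_of_dissipation (hρ : ρ ≠ 0) (h0 : Q 0 ≤ S 0)
    (hstep : ∀ n, Q (n + 1) - ρ ^ 2 * Q n + ρ ^ 2 * D (n + 1) ≤ S (n + 1))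
    (hQ : ∀ n, 0 ≤ Q n) (N : ℕ) :
    ∑ k ∈ Icc 1 N, ρ ^ (-(2 * ((k : ℤ) - 1))) * D k ≤
      ∑ k ∈ range (N + 1), ρ ^ (-(2 * (k : ℤ))) * S k := by
  have hweight : 0 ≤ ρ ^ (-(2 * (N : ℤ))) := Even.zpow_nonneg ⟨-(N : ℤ), by ring⟩ ρ
  have := sum_zpow_mul_add_le_of_dissipation hρ h0 hstep N
  linarith [mul_nonneg hweight (hQ N)]

end Telescoping

theorem variational_iqc_general
    (d : ℕ)
    (ρ : ℝ) (hρ0 : 0 < ρ) (hρ1 : ρ < 1)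
    (f : ℕ → EuclideanSpace ℝ (Fin d) → ℝ)
    (f' : ℕ → EuclideanSpace ℝ (Fin d) → EuclideanSpace ℝ (Fin d))
    (m L : ℕ → ℝ)
    (hm : ∀ k, 0 < m k) (hmL : ∀ k, m k < L k)
    (hgrad : ∀ k x, HasGradientAt (f k) (f' k x) x)
    (hsc : ∀ k, ConvexOn ℝ Set.univ (fun x => f k x - m k / 2 * ‖x‖ ^ 2))
    (hlip : ∀ k x y, ‖f' k x - f' k y‖ ≤ L k * ‖x - y‖)
    (xstar : ℕ → EuclideanSpace ℝ (Fin d))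
    (hstar : ∀ k, f' k (xstar k) = 0)
    (x : ℕ → EuclideanSpace ℝ (Fin d))
    (a : ℕ → ℝ) (ha : ∀ k, a k = Real.sqrt (m k * (L k - m k) / 2))
    (fhat : ℕ → EuclideanSpace ℝ (Fin d) → ℝ)
    (hfhat : ∀ k y, fhat k y = f k y - f k (xstar k))
    (S : ℕ → ℝ)
    (hS0 : S 0 = ⟪L 0 • (x 0 - xstar 0) - f' 0 (x 0),
                  f' 0 (x 0) - m 0 • (x 0 - xstar 0)⟫)
    (hSk : ∀ k : ℕ, S (k + 1) =
      ⟪L (k + 1) • (x (k + 1) - xstar (k + 1)) - f' (k + 1) (x (k + 1))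
          - ρ ^ 2 • (L (k + 1) • ((x k - xstar k) + (xstar k - xstar (k + 1))))
          + ρ ^ 2 • (f' k (x k) - (f' k (x k) - f' (k + 1) (x k))),
        f' (k + 1) (x (k + 1)) - m (k + 1) • (x (k + 1) - xstar (k + 1))⟫
      + ρ ^ 2 * (a k) ^ 2 * ‖x k - xstar k‖ ^ 2
      - ρ ^ 2 * (a (k + 1)) ^ 2 * ‖(x k - xstar k) + (xstar k - xstar (k + 1))‖ ^ 2
      + ρ ^ 2 / 2 * ‖f' k (x k) - m k • (x k - xstar k)‖ ^ 2
      - ρ ^ 2 / 2 * ‖f' k (x k) - (f' k (x k) - f' (k + 1) (x k))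
          - m (k + 1) • ((x k - xstar k) + (xstar k - xstar (k + 1)))‖ ^ 2) :
    ∀ N : ℕ, 1 ≤ N →
      ∑ k ∈ Finset.Icc 1 N, ρ ^ (-(2 * ((k : ℤ) - 1))) *
          ((L (k - 1) - m (k - 1)) * fhat (k - 1) (x (k - 1))
            - (L k - m k) * fhat k (x (k - 1))) ≤
      ∑ k ∈ Finset.range (N + 1), ρ ^ (-(2 * (k : ℤ))) * S k := by
  intro N _
  have hρ2 : ρ ^ 2 ≤ 1 := by nlinarith
  have ha_sq : ∀ k, a k ^ 2 = m k * (L k - m k) / 2 := fun k => by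
    rw [ha k, Real.sq_sqrt (by nlinarith [hm k, hmL k])]
  refine sum_zpow_mul_le_of_dissipation hρ0.ne'
    (Q := fun k => storage (f k) (f' k) (m k) (L k) (xstar k) (x k)) ?_ (fun k => ?_)
    (fun k => storage_nonneg_s7 (hgrad k) (hsc k) (hlip k) (hmL k) (hstar k) (x k)) N
  · have h := storage_le_inner_add (hgrad 0) (hsc 0) (hlip 0) (hmL 0) (hstar 0) le_rfl
      zero_le_one (x 0) (x 0)
    simpa [hS0] using h
  · have h := storage_le_inner_add (hgrad (k + 1)) (hsc (k + 1)) (hlip (k + 1)) (hmL (k + 1))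
      (hstar (k + 1)) (sq_nonneg ρ) hρ2 (x k) (x (k + 1))
    rw [hSk k, sub_add_sub_cancel, sub_sub_cancel, ha_sq, ha_sq]
    simp only [Nat.add_sub_cancel, hfhat, storage] at h ⊢
    linarith

/-- Variational (off-by-one) integral quadratic constraint for a time-varying
gradient: the accumulated weighted supply dominates the accumulated change of
the shifted objective landscape. -/
theorem variational_iqc
    (d : ℕ) (hd : 1 ≤ d)
    (ρ : ℝ) (hρ0 : 0 < ρ) (hρ1 : ρ < 1)
    (f : ℕ → EuclideanSpace ℝ (Fin d) → ℝ)
    (f' : ℕ → EuclideanSpace ℝ (Fin d) → EuclideanSpace ℝ (Fin d))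
    (m L : ℕ → ℝ)
    (hm : ∀ k, 0 < m k) (hmL : ∀ k, m k < L k)
    (hgrad : ∀ k x, HasGradientAt (f k) (f' k x) x)
    (hsc : ∀ k, ConvexOn ℝ Set.univ (fun x => f k x - m k / 2 * ‖x‖ ^ 2))
    (hlip : ∀ k x y, ‖f' k x - f' k y‖ ≤ L k * ‖x - y‖)
    (xstar : ℕ → EuclideanSpace ℝ (Fin d))
    (hstar : ∀ k, f' k (xstar k) = 0)
    (x : ℕ → EuclideanSpace ℝ (Fin d))
    (a : ℕ → ℝ) (ha : ∀ k, a k = Real.sqrt (m k * (L k - m k) / 2))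
    (fhat : ℕ → EuclideanSpace ℝ (Fin d) → ℝ)
    (hfhat : ∀ k y, fhat k y = f k y - f k (xstar k))
    (S : ℕ → ℝ)
    (hS0 : S 0 = ⟪L 0 • (x 0 - xstar 0) - f' 0 (x 0),
                  f' 0 (x 0) - m 0 • (x 0 - xstar 0)⟫)
    (hSk : ∀ k : ℕ, S (k + 1) =
      ⟪L (k + 1) • (x (k + 1) - xstar (k + 1)) - f' (k + 1) (x (k + 1))
          - ρ ^ 2 • (L (k + 1) • ((x k - xstar k) + (xstar k - xstar (k + 1))))
          + ρ ^ 2 • (f' k (x k) - (f' k (x k) - f' (k + 1) (x k))),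
        f' (k + 1) (x (k + 1)) - m (k + 1) • (x (k + 1) - xstar (k + 1))⟫
      + ρ ^ 2 * (a k) ^ 2 * ‖x k - xstar k‖ ^ 2
      - ρ ^ 2 * (a (k + 1)) ^ 2 * ‖(x k - xstar k) + (xstar k - xstar (k + 1))‖ ^ 2
      + ρ ^ 2 / 2 * ‖f' k (x k) - m k • (x k - xstar k)‖ ^ 2
      - ρ ^ 2 / 2 * ‖f' k (x k) - (f' k (x k) - f' (k + 1) (x k))
          - m (k + 1) • ((x k - xstar k) + (xstar k - xstar (k + 1)))‖ ^ 2) :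
    ∀ N : ℕ, 1 ≤ N →
      ∑ k ∈ Finset.Icc 1 N, ρ ^ (-(2 * ((k : ℤ) - 1))) *
          ((L (k - 1) - m (k - 1)) * fhat (k - 1) (x (k - 1))
            - (L k - m k) * fhat k (x (k - 1))) ≤
      ∑ k ∈ Finset.range (N + 1), ρ ^ (-(2 * (k : ℤ))) * S k :=
  variational_iqc_general d ρ hρ0 hρ1 f f' m L hm hmL hgrad hsc hlip xstar hstar x a ha fhat hfhat S
    hS0 hSk
end
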